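/- Let (U, 𝓑) be a measurable space in which all singletons are measurable, S ⊆ ℝ^r, and A, B : S × U → ℝ measurable in the second argument with B(α,u) > 0 for all (α,u) ∈ S × U. Suppose the test function C(α,u) = A(α,u)/B(α,u) is bounded above on S × U but does not attain its global maximum there. Then the linear-fractional integral functional is also bounded above, and sup over all α ∈ S and all probability measures Ψ on (U, 𝓑) (for which A(α,·), B(α,·) are Ψ-integrable) of I_α(Ψ) = sup over all α ∈ S and all points u ∈ U of I_α(δ_u) = sup_{(α,u) ∈ S × U} A(α,u)/B(α,u) < ∞. -/

import Mathlib

/-!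
With `M = sup A / B`, the pointwise bound `A ≤ M B` (where `B > 0`) integrates against any
probability measure `Ψ` to `∫ A ≤ M ∫ B` with `∫ B > 0`, so `M` bounds `I_α(Ψ)` as well.
Conversely the Dirac measures realise every value `A(α,u) / B(α,u)` as `I_α(δ_u)`, so the
suprema coincide.
-/

open MeasureTheory

theorem csSup_eq_of_subset_of_forall_le {α : Type*} [ConditionallyCompleteLattice α]
    {s t : Set α} (hst : s ⊆ t) (ht : ∀ x ∈ t, x ≤ sSup s) (hne : t.Nonempty → s.Nonempty) :
    sSup t = sSup s := by
  rcases t.eq_empty_or_nonempty with rfl | htne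
  · rw [Set.subset_empty_iff.mp hst]
  · exact le_antisymm (csSup_le htne ht) (csSup_le_csSup ⟨sSup s, ht⟩ (hne htne) hst)

section

variable {U : Type*} [MeasurableSpace U] {μ : Measure U} {f g : U → ℝ}

theorem integral_pos_of_forall_pos [NeZero μ] (hg : ∀ u, 0 < g u) (hgi : Integrable g μ) :
    0 < ∫ u, g u ∂μ := by
  have hsupp : Function.support g = Set.univ :=
    Set.eq_univ_of_forall fun u => (hg u).ne'
  rw [integral_pos_iff_support_of_nonneg (fun u => (hg u).le) hgi, hsupp]
  exact Measure.measure_univ_pos.mpr (NeZero.ne μ)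

theorem integral_div_integral_le_of_forall_div_le [NeZero μ] {M : ℝ}
    (hfi : Integrable f μ) (hgi : Integrable g μ) (hg : ∀ u, 0 < g u)
    (hM : ∀ u, f u / g u ≤ M) :
    (∫ u, f u ∂μ) / (∫ u, g u ∂μ) ≤ M := by
  rw [div_le_iff₀ (integral_pos_of_forall_pos hg hgi)]
  calc ∫ u, f u ∂μ ≤ ∫ u, M * g u ∂μ :=
        integral_mono hfi (hgi.const_mul M) fun u => (div_le_iff₀ (hg u)).mp (hM u)
    _ = M * ∫ u, g u ∂μ := integral_const_mul M _

variable [MeasurableSingletonClass U]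

theorem integral_div_integral_dirac (f g : U → ℝ) (u : U) :
    (∫ v, f v ∂Measure.dirac u) / (∫ v, g v ∂Measure.dirac u) = f u / g u := by
  rw [integral_dirac, integral_dirac]

theorem integrable_dirac_of_real (f : U → ℝ) (u : U) : Integrable f (Measure.dirac u) :=
  integrable_dirac enorm_lt_top

end

theorem stmt_8_general {r : ℕ} {U : Type*} [MeasurableSpace U]
    (hsing : ∀ u : U, MeasurableSet ({u} : Set U))
    (S : Set (Fin r → ℝ)) (A B : (Fin r → ℝ) → U → ℝ)
    (hB : ∀ α ∈ S, ∀ u : U, 0 < B α u)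
    (hbdd : BddAbove {x : ℝ | ∃ α ∈ S, ∃ u : U, x = A α u / B α u}) :
    BddAbove {x : ℝ | ∃ α ∈ S, ∃ Ψ : Measure U, IsProbabilityMeasure Ψ ∧
        Integrable (A α) Ψ ∧ Integrable (B α) Ψ ∧
        x = (∫ u, A α u ∂Ψ) / (∫ u, B α u ∂Ψ)} ∧
    sSup {x : ℝ | ∃ α ∈ S, ∃ Ψ : Measure U, IsProbabilityMeasure Ψ ∧
        Integrable (A α) Ψ ∧ Integrable (B α) Ψ ∧
        x = (∫ u, A α u ∂Ψ) / (∫ u, B α u ∂Ψ)}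
      = sSup {x : ℝ | ∃ α ∈ S, ∃ u : U, x = A α u / B α u} ∧
    sSup {x : ℝ | ∃ α ∈ S, ∃ u : U,
        x = (∫ v, A α v ∂(Measure.dirac u)) / (∫ v, B α v ∂(Measure.dirac u))}
      = sSup {x : ℝ | ∃ α ∈ S, ∃ u : U, x = A α u / B α u} := by
  have : MeasurableSingletonClass U := ⟨hsing⟩
  have hle : ∀ x ∈ {x : ℝ | ∃ α ∈ S, ∃ Ψ : Measure U, IsProbabilityMeasure Ψ ∧
      Integrable (A α) Ψ ∧ Integrable (B α) Ψ ∧ x = (∫ u, A α u ∂Ψ) / (∫ u, B α u ∂Ψ)},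
      x ≤ sSup {x : ℝ | ∃ α ∈ S, ∃ u : U, x = A α u / B α u} := by
    rintro x ⟨α, hα, Ψ, hΨ, hAi, hBi, rfl⟩
    exact integral_div_integral_le_of_forall_div_le hAi hBi (hB α hα)
      fun u => le_csSup hbdd ⟨α, hα, u, rfl⟩
  refine ⟨⟨_, hle⟩, csSup_eq_of_subset_of_forall_le ?_ hle ?_, ?_⟩
  · rintro x ⟨α, hα, u, rfl⟩
    exact ⟨α, hα, Measure.dirac u, inferInstance, integrable_dirac_of_real _ u,
      integrable_dirac_of_real _ u, (integral_div_integral_dirac _ _ u).symm⟩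
  · rintro ⟨x, α, hα, Ψ, hΨ, -⟩
    obtain ⟨u⟩ := nonempty_of_isProbabilityMeasure Ψ
    exact ⟨_, α, hα, u, rfl⟩
  · simp only [integral_div_integral_dirac]

/-- Lemma 2, relation (29): if the test function C(α,u) = A(α,u)/B(α,u) is bounded above
on S × U but does not attain its global maximum there, then the linear-fractional integral
functional is also bounded above, and
sup over (α,Ψ) of I_α(Ψ) = sup over (α,u) of I_α(δ_u) = sup over (α,u) of C(α,u) < ∞. -/
theorem stmt_8 {r : ℕ} {U : Type*} [MeasurableSpace U]
    (hsing : ∀ u : U, MeasurableSet ({u} : Set U))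
    (S : Set (Fin r → ℝ)) (A B : (Fin r → ℝ) → U → ℝ)
    (hAmeas : ∀ α ∈ S, Measurable (A α)) (hBmeas : ∀ α ∈ S, Measurable (B α))
    (hB : ∀ α ∈ S, ∀ u : U, 0 < B α u)
    (hbdd : BddAbove {x : ℝ | ∃ α ∈ S, ∃ u : U, x = A α u / B α u})
    (hnotattained : ¬ ∃ αs ∈ S, ∃ us : U,
        ∀ α ∈ S, ∀ u : U, A α u / B α u ≤ A αs us / B αs us) :
    BddAbove {x : ℝ | ∃ α ∈ S, ∃ Ψ : Measure U, IsProbabilityMeasure Ψ ∧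
        Integrable (A α) Ψ ∧ Integrable (B α) Ψ ∧
        x = (∫ u, A α u ∂Ψ) / (∫ u, B α u ∂Ψ)} ∧
    sSup {x : ℝ | ∃ α ∈ S, ∃ Ψ : Measure U, IsProbabilityMeasure Ψ ∧
        Integrable (A α) Ψ ∧ Integrable (B α) Ψ ∧
        x = (∫ u, A α u ∂Ψ) / (∫ u, B α u ∂Ψ)}
      = sSup {x : ℝ | ∃ α ∈ S, ∃ u : U, x = A α u / B α u} ∧
    sSup {x : ℝ | ∃ α ∈ S, ∃ u : U,
        x = (∫ v, A α v ∂(Measure.dirac u)) / (∫ v, B α v ∂(Measure.dirac u))}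
      = sSup {x : ℝ | ∃ α ∈ S, ∃ u : U, x = A α u / B α u} :=
  stmt_8_general hsing S A B hB hbdd
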